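/- Let β ∈ (0,1], let T be a positive integer with T ≤ m/(e³β) and m ≥ 10, and let f : {0,1}^m → ℝ, f(z) = (1 − β|z|/m)^T. Then for every S ∈ {0,1}^m with |S| = q, the Fourier coefficient satisfies f^(S) ≤ 4e · (1 − β/2)^T · (Tβ/m)^q · e^{22T²β²/m}. -/

import Mathlib

open Finset

/-- The character `χ_S(z) = (-1)^(S·z)` on the Boolean cube (`F₂` inner product). -/
noncomputable def boolChar {m : ℕ} (S z : Fin m → ZMod 2) : ℝ :=
  (-1 : ℝ) ^ (∑ i, S i * z i).val

/-- The Fourier coefficient `f^(S) = 2^{-m} Σ_z f(z) (-1)^(S·z)`. -/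
noncomputable def bFourierCoeff {m : ℕ} (f : (Fin m → ZMod 2) → ℝ) (S : Fin m → ZMod 2) : ℝ :=
  (∑ z : Fin m → ZMod 2, f z * boolChar S z) / 2 ^ m

/-!
Write `X(z) = Σᵢ (-1)^{zᵢ} = m - 2|z|`, so that `f = (b X + a)^T` with `a = 1 - β/2` and
`b = β/(2m)`. Expanding binomially, `f^(S) = Σ_ℓ C(T,ℓ) b^ℓ a^{T-ℓ} (X^ℓ)^(S)`, and since
`X χ_S = Σᵢ χ_{S+eᵢ}`, the coefficient `(X^ℓ)^(S)` is the number of walks of length `ℓ` from `0`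
to `S` in the cube. These exist only for `ℓ = |S| + 2r`, and there are at most `ℓ! m^r / r!` of
them. With `C(T,ℓ) ℓ! ≤ T^ℓ` and `a^{T-ℓ} ≤ 2^ℓ a^T` (as `a ≥ 1/2`) the expansion is at most
`a^T (Tβ/m)^q Σ_r (T²β²/m)^r / r! ≤ a^T (Tβ/m)^q e^{T²β²/m}`.
-/

lemma neg_one_pow_val_add {R : Type*} [Ring R] (a b : ZMod 2) :
    (-1 : R) ^ (a + b).val = (-1) ^ a.val * (-1) ^ b.val := by
  rw [ZMod.val_add, ← neg_one_pow_eq_pow_mod_two, pow_add]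

lemma neg_one_pow_val_eq_ite {R : Type*} [Ring R] (a : ZMod 2) :
    (-1 : R) ^ a.val = if a = 0 then 1 else -1 := by
  obtain rfl | rfl : a = 0 ∨ a = 1 := by revert a; decide
  · simp
  · simp [ZMod.val_one]

namespace BooleanCube

open Nat

variable {m : ℕ}

lemma boolChar_add_left (S S' z : Fin m → ZMod 2) :
    boolChar (S + S') z = boolChar S z * boolChar S' z := by
  simp only [boolChar, Pi.add_apply, add_mul, sum_add_distrib, neg_one_pow_val_add]

lemma boolChar_comm (S z : Fin m → ZMod 2) : boolChar S z = boolChar z S := by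
  simp only [boolChar, mul_comm]

lemma boolChar_add_right (S z w : Fin m → ZMod 2) :
    boolChar S (z + w) = boolChar S z * boolChar S w := by
  rw [boolChar_comm, boolChar_add_left, boolChar_comm z, boolChar_comm w]

lemma boolChar_single_left (i : Fin m) (z : Fin m → ZMod 2) :
    boolChar (Pi.single i 1) z = (-1) ^ (z i).val := by
  simp [boolChar, Pi.single_apply]

lemma sum_boolChar (S : Fin m → ZMod 2) :
    ∑ z, boolChar S z = if S = 0 then 2 ^ m else 0 := by
  split_ifs with hS
  · simp [hS, boolChar]
  · obtain ⟨i, hi⟩ : ∃ i, S i ≠ 0 := by simpa [funext_iff] using hS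
    have hflip : ∀ z, boolChar S (z + Pi.single i 1) = -boolChar S z := fun z => by
      rw [boolChar_add_right, boolChar_comm S (Pi.single i 1), boolChar_single_left,
        neg_one_pow_val_eq_ite, if_neg hi, mul_neg_one]
    have h := Equiv.sum_comp (Equiv.addRight (Pi.single i 1 : Fin m → ZMod 2)) (boolChar S)
    simp only [Equiv.coe_addRight, hflip, sum_neg_distrib] at h
    linarith

lemma bFourierCoeff_one (S : Fin m → ZMod 2) :
    bFourierCoeff (fun _ => 1) S = if S = 0 then 1 else 0 := by
  simp only [bFourierCoeff, one_mul, sum_boolChar]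
  split_ifs <;> simp

noncomputable def signSum (z : Fin m → ZMod 2) : ℝ := ∑ i, (-1 : ℝ) ^ (z i).val

lemma signSum_eq (z : Fin m → ZMod 2) : signSum z = m - 2 * hammingNorm z := by
  have h : ∀ i, (-1 : ℝ) ^ (z i).val = 1 - 2 * if z i ≠ 0 then 1 else 0 := fun i => by
    rw [neg_one_pow_val_eq_ite, ite_not]; split_ifs <;> norm_num
  simp only [signSum, h, sum_sub_distrib, ← mul_sum, sum_boole, sum_const, Finset.card_univ,
    Fintype.card_fin, nsmul_eq_mul, mul_one, hammingNorm]

lemma bFourierCoeff_sum_mul {ι : Type*} (s : Finset ι) (c : ι → ℝ)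
    (g : ι → (Fin m → ZMod 2) → ℝ) (S : Fin m → ZMod 2) :
    bFourierCoeff (fun z => ∑ k ∈ s, c k * g k z) S = ∑ k ∈ s, c k * bFourierCoeff (g k) S := by
  simp only [bFourierCoeff, sum_mul, mul_sum, sum_div]
  rw [sum_comm]
  simp only [mul_assoc, mul_div_assoc]

lemma bFourierCoeff_signSum_pow_succ (ℓ : ℕ) (S : Fin m → ZMod 2) :
    bFourierCoeff (fun z => signSum z ^ (ℓ + 1)) S
      = ∑ i, bFourierCoeff (fun z => signSum z ^ ℓ) (S + Pi.single i 1) := by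
  have h : ∀ z, signSum z ^ (ℓ + 1) * boolChar S z
      = ∑ i, signSum z ^ ℓ * boolChar (S + Pi.single i 1) z := fun z => by
    simp only [boolChar_add_left, boolChar_single_left, ← mul_sum, pow_succ, signSum]
    ring
  simp only [bFourierCoeff, h, ← sum_div]
  rw [sum_comm]

lemma hammingNorm_add_single (S : Fin m → ZMod 2) (i : Fin m) :
    hammingNorm (S + Pi.single i 1)
      = if S i = 0 then hammingNorm S + 1 else hammingNorm S - 1 := by
  have h_flip : ∀ a : ZMod 2, a + 1 ≠ 0 ↔ a = 0 := by decide
  split_ifs with hi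
  · have : univ.filter (fun j => (S + Pi.single i 1 : Fin m → ZMod 2) j ≠ 0)
        = insert i (univ.filter fun j => S j ≠ 0) := by
      ext j; rcases eq_or_ne j i with rfl | hj <;> simp [*]
    rw [hammingNorm, this, card_insert_of_notMem (by simpa using hi), hammingNorm]
  · have : univ.filter (fun j => (S + Pi.single i 1 : Fin m → ZMod 2) j ≠ 0)
        = (univ.filter fun j => S j ≠ 0).erase i := by
      ext j; rcases eq_or_ne j i with rfl | hj <;> simp [*]
    rw [hammingNorm, this, card_erase_of_mem (by simpa using hi), hammingNorm]

noncomputable def walkBound (m ℓ q : ℕ) : ℝ :=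
  if q ≤ ℓ ∧ Even (ℓ - q) then ℓ ! * m ^ ((ℓ - q) / 2) / ((ℓ - q) / 2)! else 0

lemma walkBound_nonneg (m ℓ q : ℕ) : 0 ≤ walkBound m ℓ q := by
  unfold walkBound; split_ifs <;> positivity

lemma walkBound_add_two_mul (m q r : ℕ) :
    walkBound m (q + 2 * r) q = (q + 2 * r)! * m ^ r / r ! := by
  have hr : (q + 2 * r - q) / 2 = r := by omega
  rw [walkBound, if_pos ⟨by omega, by simp⟩, hr]

lemma walkBound_of_forall_ne {m ℓ q : ℕ} (h : ∀ r, ℓ ≠ q + 2 * r) : walkBound m ℓ q = 0 := by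
  refine if_neg fun ⟨hq, r, hr⟩ => h r ?_
  omega

lemma walkBound_rec (m ℓ q : ℕ) :
    q * walkBound m ℓ (q - 1) + m * walkBound m ℓ (q + 1) ≤ walkBound m (ℓ + 1) q := by
  by_cases h : ∃ r, ℓ + 1 = q + 2 * r
  swap
  · push Not at h
    rw [walkBound_of_forall_ne h, walkBound_of_forall_ne (ℓ := ℓ) (q := q + 1)
      fun r hr => h (r + 1) (by omega)]
    rcases q with _ | q
    · simp
    · rw [walkBound_of_forall_ne (ℓ := ℓ) fun r hr => h r (by omega)]; simp
  obtain ⟨r, hr⟩ := h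
  have h_down : q * walkBound m ℓ (q - 1) ≤ q * (ℓ ! * m ^ r / r !) := by
    rcases q with _ | q
    · simp
    · obtain rfl : ℓ = q + 2 * r := by omega
      rw [Nat.add_sub_cancel, walkBound_add_two_mul]
  have h_up : m * walkBound m ℓ (q + 1) ≤ r * (ℓ ! * m ^ r / r !) := by
    rcases r with _ | r
    · simp [walkBound_of_forall_ne (ℓ := ℓ) (q := q + 1) fun r => by omega]
    · obtain rfl : ℓ = q + 1 + 2 * r := by omega
      rw [walkBound_add_two_mul, factorial_succ]
      apply le_of_eq
      push_cast
      field_simp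
      ring
  calc q * walkBound m ℓ (q - 1) + m * walkBound m ℓ (q + 1)
      ≤ (q + r) * (ℓ ! * m ^ r / r !) := by linarith
    _ ≤ (ℓ + 1) * (ℓ ! * m ^ r / r !) := by
      refine mul_le_mul_of_nonneg_right ?_ (by positivity)
      exact_mod_cast (by omega : q + r ≤ ℓ + 1)
    _ = walkBound m (ℓ + 1) q := by
      rw [hr, walkBound_add_two_mul, ← hr, factorial_succ]; push_cast; ring

lemma sum_walkBound_hammingNorm_add_single_le (ℓ : ℕ) (S : Fin m → ZMod 2) :
    ∑ i, walkBound m ℓ (hammingNorm (S + Pi.single i 1))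
      ≤ hammingNorm S * walkBound m ℓ (hammingNorm S - 1)
        + m * walkBound m ℓ (hammingNorm S + 1) := by
  have h_zeros : (#{i | S i = 0} : ℝ) ≤ m := by
    exact_mod_cast (card_filter_le _ _).trans_eq (by simp)
  have h_support : #{i | ¬S i = 0} = hammingNorm S := rfl
  simp only [hammingNorm_add_single, apply_ite (walkBound m ℓ), sum_ite, sum_const,
    nsmul_eq_mul, h_support]
  have := walkBound_nonneg m ℓ (hammingNorm S + 1)
  nlinarith

lemma bFourierCoeff_signSum_pow_le (ℓ : ℕ) (S : Fin m → ZMod 2) :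
    bFourierCoeff (fun z => signSum z ^ ℓ) S ≤ walkBound m ℓ (hammingNorm S) := by
  induction ℓ generalizing S with
  | zero =>
    simp only [pow_zero, bFourierCoeff_one]
    split_ifs with hS
    · simp [hS, walkBound]
    · exact walkBound_nonneg _ _ _
  | succ ℓ ih =>
    rw [bFourierCoeff_signSum_pow_succ]
    calc _ ≤ ∑ i, walkBound m ℓ (hammingNorm (S + Pi.single i 1)) :=
          sum_le_sum fun i _ => ih _
      _ ≤ _ := sum_walkBound_hammingNorm_add_single_le ℓ S
      _ ≤ _ := walkBound_rec m ℓ _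

lemma choose_mul_walkBound_le {a b : ℝ} (ha : 1 ≤ 2 * a) (hb : 0 ≤ b) {T q r : ℕ}
    (hT : q + 2 * r ≤ T) :
    T.choose (q + 2 * r) * b ^ (q + 2 * r) * a ^ (T - (q + 2 * r)) * walkBound m (q + 2 * r) q
      ≤ a ^ T * (2 * b * T) ^ q * (((2 * b * T) ^ 2 * m) ^ r / r !) := by
  have ha0 : 0 ≤ a := by linarith
  have h_choose : (T.choose (q + 2 * r) : ℝ) * (q + 2 * r)! ≤ T ^ (q + 2 * r) := by
    have := choose_le_pow_div (α := ℝ) (q + 2 * r) T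
    rwa [le_div_iff₀ (by positivity)] at this
  have h_pow : a ^ (T - (q + 2 * r)) ≤ 2 ^ (q + 2 * r) * a ^ T := by
    have h_one : 1 ≤ (2 * a) ^ (q + 2 * r) := one_le_pow₀ ha
    calc a ^ (T - (q + 2 * r)) ≤ a ^ (T - (q + 2 * r)) * (2 * a) ^ (q + 2 * r) :=
          le_mul_of_one_le_right (by positivity) h_one
      _ = 2 ^ (q + 2 * r) * a ^ T := by
          rw [mul_pow, ← mul_assoc, mul_comm _ (2 ^ _), mul_assoc, ← pow_add,
            Nat.sub_add_cancel hT]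
  rw [walkBound_add_two_mul]
  calc T.choose (q + 2 * r) * b ^ (q + 2 * r) * a ^ (T - (q + 2 * r))
        * ((q + 2 * r)! * m ^ r / r !)
      = (T.choose (q + 2 * r) * (q + 2 * r)!) * a ^ (T - (q + 2 * r))
          * (b ^ (q + 2 * r) * m ^ r / r !) := by ring
    _ ≤ T ^ (q + 2 * r) * (2 ^ (q + 2 * r) * a ^ T) * (b ^ (q + 2 * r) * m ^ r / r !) := by
      gcongr
    _ = a ^ T * ((2 * b * T) ^ (q + 2 * r) * m ^ r / r !) := by ring
    _ = a ^ T * (2 * b * T) ^ q * (((2 * b * T) ^ 2 * m) ^ r / r !) := by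
      rw [pow_add, pow_mul, mul_pow]; ring

lemma sum_choose_mul_walkBound_le {a b : ℝ} (ha : 1 ≤ 2 * a) (hb : 0 ≤ b) (m T q : ℕ) :
    ∑ ℓ ∈ range (T + 1), T.choose ℓ * b ^ ℓ * a ^ (T - ℓ) * walkBound m ℓ q
      ≤ a ^ T * (2 * b * T) ^ q * Real.exp ((2 * b * T) ^ 2 * m) := by
  set x := (2 * b * T) ^ 2 * m
  have hx : 0 ≤ x := by positivity
  have hc : 0 ≤ a ^ T * (2 * b * T) ^ q := by
    have : 0 ≤ a := by linarith
    positivity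
  -- only the terms with `ℓ = q + 2r` survive, so reindex by `r`
  rw [← sum_preimage (fun r => q + 2 * r) _ (fun r _ r' _ h => by simpa using h)
    (fun ℓ => T.choose ℓ * b ^ ℓ * a ^ (T - ℓ) * walkBound m ℓ q)
    fun ℓ _ hℓ => by
      rw [walkBound_of_forall_ne fun r h => hℓ ⟨r, h.symm⟩, mul_zero]]
  calc ∑ r ∈ (range (T + 1)).preimage _ _, T.choose (q + 2 * r) * b ^ (q + 2 * r)
        * a ^ (T - (q + 2 * r)) * walkBound m (q + 2 * r) q
      ≤ ∑ r ∈ (range (T + 1)).preimage _ _, a ^ T * (2 * b * T) ^ q * (x ^ r / r !) :=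
        sum_le_sum fun r hr => choose_mul_walkBound_le ha hb
          (by have := mem_preimage.mp hr; simp at this; omega)
    _ ≤ ∑ r ∈ range (T + 1), a ^ T * (2 * b * T) ^ q * (x ^ r / r !) :=
        sum_le_sum_of_subset_of_nonneg
          (fun r hr => by have := mem_preimage.mp hr; simp at this ⊢; omega)
          fun r _ _ => by positivity
    _ ≤ a ^ T * (2 * b * T) ^ q * Real.exp x := by
        rw [← mul_sum]
        exact mul_le_mul_of_nonneg_left (Real.sum_le_exp_of_nonneg hx _) hc

lemma bFourierCoeff_affine_signSum_pow_le {a b : ℝ} (ha : 0 ≤ a) (hb : 0 ≤ b) (T : ℕ)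
    (S : Fin m → ZMod 2) :
    bFourierCoeff (fun z => (b * signSum z + a) ^ T) S
      ≤ ∑ ℓ ∈ range (T + 1),
          T.choose ℓ * b ^ ℓ * a ^ (T - ℓ) * walkBound m ℓ (hammingNorm S) := by
  have h_expand : (fun z : Fin m → ZMod 2 => (b * signSum z + a) ^ T) = fun z =>
      ∑ ℓ ∈ range (T + 1), (T.choose ℓ * b ^ ℓ * a ^ (T - ℓ)) * signSum z ^ ℓ := by
    funext z
    rw [add_pow]
    exact sum_congr rfl fun ℓ _ => by ring
  rw [h_expand, bFourierCoeff_sum_mul]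
  gcongr with ℓ
  exact bFourierCoeff_signSum_pow_le ℓ S

lemma bFourierCoeff_one_sub_hammingNorm_pow_le (hm : m ≠ 0) {β : ℝ} (hβ0 : 0 ≤ β)
    (hβ1 : β ≤ 1) (T : ℕ) (S : Fin m → ZMod 2) :
    bFourierCoeff (fun z => (1 - β * hammingNorm z / m) ^ T) S
      ≤ (1 - β / 2) ^ T * (T * β / m) ^ hammingNorm S * Real.exp (T ^ 2 * β ^ 2 / m) := by
  have hm' : (m : ℝ) ≠ 0 := by exact_mod_cast hm
  have h_affine : ∀ z : Fin m → ZMod 2,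
      1 - β * hammingNorm z / m = β / (2 * m) * signSum z + (1 - β / 2) := fun z => by
    rw [signSum_eq]; field_simp; ring
  simp only [h_affine]
  calc _ ≤ _ := bFourierCoeff_affine_signSum_pow_le (by linarith) (by positivity) T S
    _ ≤ _ := sum_choose_mul_walkBound_le (by linarith) (by positivity) m T _
    _ = _ := by
      have hp : 2 * (β / (2 * m)) * T = T * β / m := by field_simp
      rw [hp]
      congr 2
      field_simp

end BooleanCube

theorem fourierCoeff_upper_bound_general {m : ℕ} (hm : 10 ≤ m)
    (β : ℝ) (hβ0 : 0 < β) (hβ1 : β ≤ 1)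
    (T : ℕ)
    (f : (Fin m → ZMod 2) → ℝ)
    (hf : ∀ z, f z = (1 - β * (hammingNorm z : ℝ) / (m : ℝ)) ^ T)
    (S : Fin m → ZMod 2) (q : ℕ) (hq : hammingNorm S = q) :
    bFourierCoeff f S
      ≤ 4 * Real.exp 1 * (1 - β / 2) ^ T * ((T : ℝ) * β / (m : ℝ)) ^ q
          * Real.exp (22 * (T : ℝ) ^ 2 * β ^ 2 / (m : ℝ)) := by
  have h_bound := BooleanCube.bFourierCoeff_one_sub_hammingNorm_pow_le (by omega) hβ0.le hβ1 T S
  rw [← funext hf, hq] at h_bound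
  have h_const : 1 ≤ 4 * Real.exp 1 := by linarith [Real.add_one_le_exp 1]
  have h_exp : Real.exp (T ^ 2 * β ^ 2 / m) ≤ Real.exp (22 * T ^ 2 * β ^ 2 / m) := by
    gcongr
    exact le_mul_of_one_le_left (by positivity) (by norm_num)
  have h_coeff : 0 ≤ (1 - β / 2) ^ T * ((T : ℝ) * β / m) ^ q := by
    have : 0 ≤ 1 - β / 2 := by linarith
    positivity
  calc bFourierCoeff f S
      ≤ 1 * ((1 - β / 2) ^ T * (T * β / m) ^ q) * Real.exp (T ^ 2 * β ^ 2 / m) := by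
        rwa [one_mul]
    _ ≤ 4 * Real.exp 1 * ((1 - β / 2) ^ T * (T * β / m) ^ q)
          * Real.exp (22 * T ^ 2 * β ^ 2 / m) := by
        gcongr
    _ = _ := by ring

/-- For `β ∈ (0,1]`, `1 ≤ T ≤ m/(e³β)`, `m ≥ 10` and `f(z) = (1 - β|z|/m)^T`, every
Fourier coefficient satisfies `f^(S) ≤ 4e (1-β/2)^T (Tβ/m)^q e^{22T²β²/m}` where
`q = |S|` is the Hamming weight of `S`. -/
theorem fourierCoeff_upper_bound {m : ℕ} (hm : 10 ≤ m)
    (β : ℝ) (hβ0 : 0 < β) (hβ1 : β ≤ 1)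
    (T : ℕ) (hT1 : 1 ≤ T) (hT : (T : ℝ) ≤ (m : ℝ) / (Real.exp 1 ^ 3 * β))
    (f : (Fin m → ZMod 2) → ℝ)
    (hf : ∀ z, f z = (1 - β * (hammingNorm z : ℝ) / (m : ℝ)) ^ T)
    (S : Fin m → ZMod 2) (q : ℕ) (hq : hammingNorm S = q) :
    bFourierCoeff f S
      ≤ 4 * Real.exp 1 * (1 - β / 2) ^ T * ((T : ℝ) * β / (m : ℝ)) ^ q
          * Real.exp (22 * (T : ℝ) ^ 2 * β ^ 2 / (m : ℝ)) :=
  fourierCoeff_upper_bound_general hm β hβ0 hβ1 T f hf S q hq
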